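/- Let Ω ⊆ ℝ³ be open, u : Ω → ℝ smooth, m, p : ℝ → ℝ smooth, ε ∈ ℝ. Define Φ(x,y,t) = (x − ε m(u(x,y,t)), y − ε p(u(x,y,t)), t) and suppose Φ is a bijection of Ω onto an open set Ω̄ with smooth inverse, and D := 1 − ε(m'(u) u_x + p'(u) u_y) ≠ 0 on Ω. Let F, G, H : Ω → ℝ be smooth with u_tt = F_x + G_y + H on Ω. Set ū = u ∘ Φ⁻¹ and define F̄, Ḡ, H̄ : Ω̄ → ℝ by F̄ ∘ Φ = ((1 − ε m'(u) u_x)F − ε m'(u)(u_y G − u_t²))/D, Ḡ ∘ Φ = ((1 − ε p'(u) u_y)G − ε p'(u)(u_x F − u_t²))/D, H̄ ∘ Φ = H/D. Then ū_t̄t̄ = F̄_x̄ + Ḡ_ȳ + H̄ on Ω̄, where subscripts x̄, ȳ, t̄ denote partial derivatives with respect to the first, second and third arguments on Ω̄. -/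

import Mathlib

/- STATEMENT 14: the point transformation x̄ = x − ε m(u), ȳ = y − ε p(u), t̄ = t
keeps the family of balance-law wave equations u_tt = F_x + G_y + H invariant,
with transformed fluxes
F̄∘Φ = ((1 − ε m'(u)u_x)F − ε m'(u)(u_y G − u_t²))/D,
Ḡ∘Φ = ((1 − ε p'(u)u_y)G − ε p'(u)(u_x F − u_t²))/D, H̄∘Φ = H/D,
where D = 1 − ε(m'(u)u_x + p'(u)u_y).  The function p is denoted P below. -/

noncomputable section

/-- Partial derivative with respect to the first variable (x) of a function on ℝ³. -/
def pdx (f : ℝ × ℝ × ℝ → ℝ) (p : ℝ × ℝ × ℝ) : ℝ :=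
  deriv (fun s => f (s, p.2.1, p.2.2)) p.1

/-- Partial derivative with respect to the second variable (y). -/
def pdy (f : ℝ × ℝ × ℝ → ℝ) (p : ℝ × ℝ × ℝ) : ℝ :=
  deriv (fun s => f (p.1, s, p.2.2)) p.2.1

/-- Partial derivative with respect to the third variable (t). -/
def pdt (f : ℝ × ℝ × ℝ → ℝ) (p : ℝ × ℝ × ℝ) : ℝ :=
  deriv (fun s => f (p.1, p.2.1, s)) p.2.2

open Filter Topology

lemma hasDerivAt_lineX (q : ℝ × ℝ × ℝ) :
    HasDerivAt (fun s : ℝ => ((s, q.2.1, q.2.2) : ℝ × ℝ × ℝ)) (1, 0, 0) q.1 :=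
  (hasDerivAt_id q.1).prodMk ((hasDerivAt_const _ _).prodMk (hasDerivAt_const _ _))

lemma hasDerivAt_lineY (q : ℝ × ℝ × ℝ) :
    HasDerivAt (fun s : ℝ => ((q.1, s, q.2.2) : ℝ × ℝ × ℝ)) (0, 1, 0) q.2.1 :=
  (hasDerivAt_const _ _).prodMk ((hasDerivAt_id _).prodMk (hasDerivAt_const _ _))

lemma hasDerivAt_lineT (q : ℝ × ℝ × ℝ) :
    HasDerivAt (fun s : ℝ => ((q.1, q.2.1, s) : ℝ × ℝ × ℝ)) (0, 0, 1) q.2.2 :=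
  (hasDerivAt_const _ _).prodMk ((hasDerivAt_const _ _).prodMk (hasDerivAt_id _))

lemma pdx_eq_fderiv {w : ℝ × ℝ × ℝ → ℝ} {q : ℝ × ℝ × ℝ} (hw : DifferentiableAt ℝ w q) :
    pdx w q = fderiv ℝ w q (1, 0, 0) :=
  (hw.hasFDerivAt.comp_hasDerivAt q.1 (hasDerivAt_lineX q)).deriv

lemma pdy_eq_fderiv {w : ℝ × ℝ × ℝ → ℝ} {q : ℝ × ℝ × ℝ} (hw : DifferentiableAt ℝ w q) :
    pdy w q = fderiv ℝ w q (0, 1, 0) :=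
  (hw.hasFDerivAt.comp_hasDerivAt q.2.1 (hasDerivAt_lineY q)).deriv

lemma pdt_eq_fderiv {w : ℝ × ℝ × ℝ → ℝ} {q : ℝ × ℝ × ℝ} (hw : DifferentiableAt ℝ w q) :
    pdt w q = fderiv ℝ w q (0, 0, 1) :=
  (hw.hasFDerivAt.comp_hasDerivAt q.2.2 (hasDerivAt_lineT q)).deriv

lemma hasDerivAt_pdx {w : ℝ × ℝ × ℝ → ℝ} {q : ℝ × ℝ × ℝ} (hw : DifferentiableAt ℝ w q) :
    HasDerivAt (fun s => w (s, q.2.1, q.2.2)) (pdx w q) q.1 := by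
  rw [pdx_eq_fderiv hw]
  exact hw.hasFDerivAt.comp_hasDerivAt q.1 (hasDerivAt_lineX q)

lemma hasDerivAt_pdy {w : ℝ × ℝ × ℝ → ℝ} {q : ℝ × ℝ × ℝ} (hw : DifferentiableAt ℝ w q) :
    HasDerivAt (fun s => w (q.1, s, q.2.2)) (pdy w q) q.2.1 := by
  rw [pdy_eq_fderiv hw]
  exact hw.hasFDerivAt.comp_hasDerivAt q.2.1 (hasDerivAt_lineY q)

lemma hasDerivAt_pdt {w : ℝ × ℝ × ℝ → ℝ} {q : ℝ × ℝ × ℝ} (hw : DifferentiableAt ℝ w q) :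
    HasDerivAt (fun s => w (q.1, q.2.1, s)) (pdt w q) q.2.2 := by
  rw [pdt_eq_fderiv hw]
  exact hw.hasFDerivAt.comp_hasDerivAt q.2.2 (hasDerivAt_lineT q)

lemma hasDerivAt_comp_curve {γ : ℝ → ℝ × ℝ × ℝ} {v : ℝ × ℝ × ℝ} {s : ℝ}
    {w : ℝ × ℝ × ℝ → ℝ} (hγ : HasDerivAt γ v s) (hw : DifferentiableAt ℝ w (γ s)) :
    HasDerivAt (fun x => w (γ x))
      (v.1 * pdx w (γ s) + v.2.1 * pdy w (γ s) + v.2.2 * pdt w (γ s)) s := by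
  have h2 := hw.hasFDerivAt.comp_hasDerivAt s hγ
  have hv : v = v.1 • ((1,0,0) : ℝ×ℝ×ℝ) + v.2.1 • (0,1,0) + v.2.2 • (0,0,1) := by
    obtain ⟨a, b, c⟩ := v; simp [Prod.ext_iff]
  have he : fderiv ℝ w (γ s) v
      = v.1 * pdx w (γ s) + v.2.1 * pdy w (γ s) + v.2.2 * pdt w (γ s) := by
    rw [pdx_eq_fderiv hw, pdy_eq_fderiv hw, pdt_eq_fderiv hw]
    conv_lhs => rw [hv]
    rw [map_add, map_add, map_smul, map_smul, map_smul]
    simp [smul_eq_mul]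
  rw [← he]
  exact h2

lemma pdx_congr {f g : ℝ × ℝ × ℝ → ℝ} {z : ℝ × ℝ × ℝ} (h : f =ᶠ[nhds z] g) :
    pdx f z = pdx g z :=
  (h.comp_tendsto (hasDerivAt_lineX z).continuousAt).deriv_eq

lemma pdy_congr {f g : ℝ × ℝ × ℝ → ℝ} {z : ℝ × ℝ × ℝ} (h : f =ᶠ[nhds z] g) :
    pdy f z = pdy g z :=
  (h.comp_tendsto (hasDerivAt_lineY z).continuousAt).deriv_eq

lemma pdt_congr {f g : ℝ × ℝ × ℝ → ℝ} {z : ℝ × ℝ × ℝ} (h : f =ᶠ[nhds z] g) :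
    pdt f z = pdt g z :=
  (h.comp_tendsto (hasDerivAt_lineT z).continuousAt).deriv_eq

lemma diffAt_div3 {c d : ℝ × ℝ × ℝ → ℝ} {x : ℝ × ℝ × ℝ}
    (hc : DifferentiableAt ℝ c x) (hd : DifferentiableAt ℝ d x) (hx : d x ≠ 0) :
    DifferentiableAt ℝ (fun z => c z / d z) x := by
  have h := hc.mul (hd.inv hx)
  have e : (fun z => c z / d z) = fun z => c z * (d z)⁻¹ := by
    funext z; rw [div_eq_mul_inv]
  rw [e]; exact h

set_option maxHeartbeats 2000000 in

theorem stmt_14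
    (Ω Ωb : Set (ℝ × ℝ × ℝ)) (hΩ : IsOpen Ω) (hΩb : IsOpen Ωb)
    (u : ℝ × ℝ × ℝ → ℝ) (hu : ContDiffOn ℝ (⊤ : ℕ∞) u Ω)
    (m P : ℝ → ℝ) (hm : ContDiff ℝ (⊤ : ℕ∞) m) (hP : ContDiff ℝ (⊤ : ℕ∞) P) (ε : ℝ)
    (Φ Ψ : ℝ × ℝ × ℝ → ℝ × ℝ × ℝ)
    (hΦ : ∀ q : ℝ × ℝ × ℝ, Φ q = (q.1 - ε * m (u q), q.2.1 - ε * P (u q), q.2.2))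
    (himage : Φ '' Ω = Ωb)
    (hΨ : ContDiffOn ℝ (⊤ : ℕ∞) Ψ Ωb)
    (hleft : ∀ q ∈ Ω, Ψ (Φ q) = q)
    (hright : ∀ q ∈ Ωb, Φ (Ψ q) = q)
    -- nondegeneracy: D = 1 − ε(m'(u)u_x + p'(u)u_y) ≠ 0 on Ω
    (hD : ∀ q ∈ Ω, 1 - ε * (deriv m (u q) * pdx u q + deriv P (u q) * pdy u q) ≠ 0)
    (F G H : ℝ × ℝ × ℝ → ℝ)
    (hF : ContDiffOn ℝ (⊤ : ℕ∞) F Ω) (hG : ContDiffOn ℝ (⊤ : ℕ∞) G Ω) (hH : ContDiffOn ℝ (⊤ : ℕ∞) H Ω)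
    -- u solves u_tt = F_x + G_y + H on Ω
    (hwave : ∀ q ∈ Ω, pdt (pdt u) q = pdx F q + pdy G q + H q)
    (Fb Gb Hb : ℝ × ℝ × ℝ → ℝ)
    -- F̄ ∘ Φ = ((1 − ε m'(u)u_x)F − ε m'(u)(u_y G − u_t²))/D
    (hFb : ∀ q ∈ Ω, Fb (Φ q) =
      ((1 - ε * deriv m (u q) * pdx u q) * F q
          - ε * deriv m (u q) * (pdy u q * G q - (pdt u q) ^ 2))
        / (1 - ε * (deriv m (u q) * pdx u q + deriv P (u q) * pdy u q)))
    -- Ḡ ∘ Φ = ((1 − ε p'(u)u_y)G − ε p'(u)(u_x F − u_t²))/D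
    (hGb : ∀ q ∈ Ω, Gb (Φ q) =
      ((1 - ε * deriv P (u q) * pdy u q) * G q
          - ε * deriv P (u q) * (pdx u q * F q - (pdt u q) ^ 2))
        / (1 - ε * (deriv m (u q) * pdx u q + deriv P (u q) * pdy u q)))
    -- H̄ ∘ Φ = H/D
    (hHb : ∀ q ∈ Ω, Hb (Φ q) =
      H q / (1 - ε * (deriv m (u q) * pdx u q + deriv P (u q) * pdy u q))) :
    -- then ū = u ∘ Ψ solves ū_t̄t̄ = F̄_x̄ + Ḡ_ȳ + H̄ on Ωb
    ∀ q ∈ Ωb,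
      pdt (pdt (fun r => u (Ψ r))) q = pdx Fb q + pdy Gb q + Hb q := by
  -- basic membership and differentiability facts
  have hmem : ∀ r ∈ Ωb, Ψ r ∈ Ω := by
    intro r hr
    rw [← himage] at hr
    obtain ⟨s, hs, rfl⟩ := hr
    rw [hleft s hs]; exact hs
  have hΨdiff : ∀ r ∈ Ωb, DifferentiableAt ℝ Ψ r := fun r hr =>
    (hΨ.differentiableOn (by simp)).differentiableAt (hΩb.mem_nhds hr)
  have hudiff : ∀ z ∈ Ω, DifferentiableAt ℝ u z := fun z hz =>
    (hu.differentiableOn (by simp)).differentiableAt (hΩ.mem_nhds hz)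
  have hFdiff : ∀ z ∈ Ω, DifferentiableAt ℝ F z := fun z hz =>
    (hF.differentiableOn (by simp)).differentiableAt (hΩ.mem_nhds hz)
  have hGdiff : ∀ z ∈ Ω, DifferentiableAt ℝ G z := fun z hz =>
    (hG.differentiableOn (by simp)).differentiableAt (hΩ.mem_nhds hz)
  have hub : ∀ r ∈ Ωb, DifferentiableAt ℝ (fun x => u (Ψ x)) r := fun r hr =>
    (hudiff _ (hmem r hr)).comp r (hΨdiff r hr)
  have hm1 : Differentiable ℝ m := hm.differentiable (by simp)
  have hP1 : Differentiable ℝ P := hP.differentiable (by simp)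
  have hle : (1 : WithTop ℕ∞) ≤ ↑(⊤:ℕ∞) := by exact_mod_cast le_top
  have hmd1 : Differentiable ℝ (deriv m) :=
    ((contDiff_infty_iff_deriv.mp (hm.of_le (by simp))).2).differentiable (by simp)
  have hPd1 : Differentiable ℝ (deriv P) :=
    ((contDiff_infty_iff_deriv.mp (hP.of_le (by simp))).2).differentiable (by simp)
  -- differentiability of the partial derivatives of u
  have hfd : ContDiffOn ℝ (↑(⊤:ℕ∞)) (fderiv ℝ u) Ω := hu.fderiv_of_isOpen hΩ (by simp)
  have happ : ∀ v : ℝ × ℝ × ℝ, ∀ z ∈ Ω,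
      DifferentiableAt ℝ (fun r => fderiv ℝ u r v) z := fun v z hz =>
    (((hfd.clm_apply contDiffOn_const).differentiableOn (by simp)).differentiableAt
      (hΩ.mem_nhds hz))
  have hpdxu : ∀ z ∈ Ω, DifferentiableAt ℝ (pdx u) z := by
    intro z hz
    exact (happ (1,0,0) z hz).congr_of_eventuallyEq
      (Filter.eventuallyEq_of_mem (hΩ.mem_nhds hz)
        (fun r hr => pdx_eq_fderiv (hudiff r hr)))
  have hpdyu : ∀ z ∈ Ω, DifferentiableAt ℝ (pdy u) z := by
    intro z hz
    exact (happ (0,1,0) z hz).congr_of_eventuallyEq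
      (Filter.eventuallyEq_of_mem (hΩ.mem_nhds hz)
        (fun r hr => pdy_eq_fderiv (hudiff r hr)))
  have hpdtu : ∀ z ∈ Ω, DifferentiableAt ℝ (pdt u) z := by
    intro z hz
    exact (happ (0,0,1) z hz).congr_of_eventuallyEq
      (Filter.eventuallyEq_of_mem (hΩ.mem_nhds hz)
        (fun r hr => pdt_eq_fderiv (hudiff r hr)))
  -- symmetry of second partial derivatives
  have hmix : ∀ z ∈ Ω, ∀ v w : ℝ × ℝ × ℝ,
      fderiv ℝ (fun r => fderiv ℝ u r v) z w
        = fderiv ℝ (fun r => fderiv ℝ u r w) z v := by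
    intro z hz v w
    have hdz : DifferentiableAt ℝ (fderiv ℝ u) z :=
      ((hfd.differentiableOn (by simp)).differentiableAt (hΩ.mem_nhds hz))
    have hsym := (hu.contDiffAt (hΩ.mem_nhds hz)).isSymmSndFDerivAt (by rw [minSmoothness_of_isRCLikeNormedField]; exact WithTop.coe_le_coe.mpr (le_top : (2:ℕ∞) ≤ ⊤))
    have key : ∀ v' : ℝ × ℝ × ℝ,
        fderiv ℝ (fun r => fderiv ℝ u r v') z
          = (fderiv ℝ (fderiv ℝ u) z).flip v' := by
      intro v'
      have h1 := hdz.hasFDerivAt.clm_apply (hasFDerivAt_const v' z)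
      rw [h1.fderiv]
      simp
    rw [key v, key w]
    simp only [ContinuousLinearMap.flip_apply]
    exact hsym w v
  -- scalar versions of Clairaut at points of Ω
  have heqx : ∀ z ∈ Ω, pdx u =ᶠ[nhds z] (fun r => fderiv ℝ u r (1,0,0)) := fun z hz =>
    Filter.eventuallyEq_of_mem (hΩ.mem_nhds hz) (fun r hr => pdx_eq_fderiv (hudiff r hr))
  have heqy : ∀ z ∈ Ω, pdy u =ᶠ[nhds z] (fun r => fderiv ℝ u r (0,1,0)) := fun z hz =>
    Filter.eventuallyEq_of_mem (hΩ.mem_nhds hz) (fun r hr => pdy_eq_fderiv (hudiff r hr))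
  have heqt : ∀ z ∈ Ω, pdt u =ᶠ[nhds z] (fun r => fderiv ℝ u r (0,0,1)) := fun z hz =>
    Filter.eventuallyEq_of_mem (hΩ.mem_nhds hz) (fun r hr => pdt_eq_fderiv (hudiff r hr))
  have hmix_xy : ∀ z ∈ Ω, pdx (pdy u) z = pdy (pdx u) z := by
    intro z hz
    calc pdx (pdy u) z = pdx (fun r => fderiv ℝ u r (0,1,0)) z := pdx_congr (heqy z hz)
      _ = fderiv ℝ (fun r => fderiv ℝ u r (0,1,0)) z (1,0,0) := pdx_eq_fderiv (happ _ z hz)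
      _ = fderiv ℝ (fun r => fderiv ℝ u r (1,0,0)) z (0,1,0) := hmix z hz _ _
      _ = pdy (fun r => fderiv ℝ u r (1,0,0)) z := (pdy_eq_fderiv (happ _ z hz)).symm
      _ = pdy (pdx u) z := (pdy_congr (heqx z hz)).symm
  have hmix_xt : ∀ z ∈ Ω, pdx (pdt u) z = pdt (pdx u) z := by
    intro z hz
    calc pdx (pdt u) z = pdx (fun r => fderiv ℝ u r (0,0,1)) z := pdx_congr (heqt z hz)
      _ = fderiv ℝ (fun r => fderiv ℝ u r (0,0,1)) z (1,0,0) := pdx_eq_fderiv (happ _ z hz)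
      _ = fderiv ℝ (fun r => fderiv ℝ u r (1,0,0)) z (0,0,1) := hmix z hz _ _
      _ = pdt (fun r => fderiv ℝ u r (1,0,0)) z := (pdt_eq_fderiv (happ _ z hz)).symm
      _ = pdt (pdx u) z := (pdt_congr (heqx z hz)).symm
  have hmix_yt : ∀ z ∈ Ω, pdy (pdt u) z = pdt (pdy u) z := by
    intro z hz
    calc pdy (pdt u) z = pdy (fun r => fderiv ℝ u r (0,0,1)) z := pdy_congr (heqt z hz)
      _ = fderiv ℝ (fun r => fderiv ℝ u r (0,0,1)) z (0,1,0) := pdy_eq_fderiv (happ _ z hz)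
      _ = fderiv ℝ (fun r => fderiv ℝ u r (0,1,0)) z (0,0,1) := hmix z hz _ _
      _ = pdt (fun r => fderiv ℝ u r (0,1,0)) z := (pdt_eq_fderiv (happ _ z hz)).symm
      _ = pdt (pdy u) z := (pdt_congr (heqy z hz)).symm
  -- structure of the inverse map
  have hstruct : ∀ r ∈ Ωb,
      Ψ r = (r.1 + ε * m (u (Ψ r)), r.2.1 + ε * P (u (Ψ r)), r.2.2) := by
    intro r hr
    have h1 := hright r hr
    rw [hΦ (Ψ r)] at h1
    rw [Prod.ext_iff, Prod.ext_iff] at h1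
    obtain ⟨e1, e2, e3⟩ : _ ∧ _ ∧ _ := ⟨h1.1, h1.2.1, h1.2.2⟩
    simp only at e1 e2 e3
    have : Ψ r = ((Ψ r).1, (Ψ r).2.1, (Ψ r).2.2) := rfl
    rw [this]
    refine Prod.ext ?_ (Prod.ext ?_ ?_) <;> simp only
    · linarith
    · linarith
    · exact e3
  -- neighbourhood facts along coordinate lines in Ωb
  have hnbX : ∀ r ∈ Ωb, ∀ᶠ s in nhds r.1, ((s, r.2.1, r.2.2) : ℝ×ℝ×ℝ) ∈ Ωb := fun r hr =>
    (hasDerivAt_lineX r).continuousAt.preimage_mem_nhds (hΩb.mem_nhds hr)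
  have hnbY : ∀ r ∈ Ωb, ∀ᶠ s in nhds r.2.1, ((r.1, s, r.2.2) : ℝ×ℝ×ℝ) ∈ Ωb := fun r hr =>
    (hasDerivAt_lineY r).continuousAt.preimage_mem_nhds (hΩb.mem_nhds hr)
  have hnbT : ∀ r ∈ Ωb, ∀ᶠ s in nhds r.2.2, ((r.1, r.2.1, s) : ℝ×ℝ×ℝ) ∈ Ωb := fun r hr =>
    (hasDerivAt_lineT r).continuousAt.preimage_mem_nhds (hΩb.mem_nhds hr)
  -- transport of partial derivatives through Ψ : x-direction
  have transX : ∀ r ∈ Ωb, ∀ w : ℝ × ℝ × ℝ → ℝ, DifferentiableAt ℝ w (Ψ r) →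
      pdx (fun x => w (Ψ x)) r =
        (1 + ε * (deriv m (u (Ψ r)) * pdx (fun x => u (Ψ x)) r)) * pdx w (Ψ r)
          + (ε * (deriv P (u (Ψ r)) * pdx (fun x => u (Ψ x)) r)) * pdy w (Ψ r) := by
    intro r hr w hw
    have hXd : HasDerivAt (fun s => u (Ψ (s, r.2.1, r.2.2)))
        (pdx (fun x => u (Ψ x)) r) r.1 := hasDerivAt_pdx (hub r hr)
    have h1 : HasDerivAt (fun s => s + ε * m (u (Ψ (s, r.2.1, r.2.2))))
        (1 + ε * (deriv m (u (Ψ r)) * pdx (fun x => u (Ψ x)) r)) r.1 :=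
      (hasDerivAt_id r.1).add
        (HasDerivAt.const_mul ε (((hm1 (u (Ψ r))).hasDerivAt).comp r.1 hXd))
    have h2 : HasDerivAt (fun s => r.2.1 + ε * P (u (Ψ (s, r.2.1, r.2.2))))
        (0 + ε * (deriv P (u (Ψ r)) * pdx (fun x => u (Ψ x)) r)) r.1 :=
      (hasDerivAt_const _ _).add
        (HasDerivAt.const_mul ε (((hP1 (u (Ψ r))).hasDerivAt).comp r.1 hXd))
    have h3 : HasDerivAt (fun _ : ℝ => r.2.2) 0 r.1 := hasDerivAt_const _ _
    have hγ : HasDerivAt (fun s => Ψ (s, r.2.1, r.2.2))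
        ((1 + ε * (deriv m (u (Ψ r)) * pdx (fun x => u (Ψ x)) r)),
          (0 + ε * (deriv P (u (Ψ r)) * pdx (fun x => u (Ψ x)) r)), (0:ℝ)) r.1 := by
      refine (h1.prodMk (h2.prodMk h3)).congr_of_eventuallyEq ?_
      filter_upwards [hnbX r hr] with s hs
      exact hstruct _ hs
    have hbig := hasDerivAt_comp_curve hγ hw
    have hres : pdx (fun x => w (Ψ x)) r = _ := hbig.deriv
    rw [hres]
    simp only [Prod.mk.eta]
    ring
  -- y-direction
  have transY : ∀ r ∈ Ωb, ∀ w : ℝ × ℝ × ℝ → ℝ, DifferentiableAt ℝ w (Ψ r) →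
      pdy (fun x => w (Ψ x)) r =
        (ε * (deriv m (u (Ψ r)) * pdy (fun x => u (Ψ x)) r)) * pdx w (Ψ r)
          + (1 + ε * (deriv P (u (Ψ r)) * pdy (fun x => u (Ψ x)) r)) * pdy w (Ψ r) := by
    intro r hr w hw
    have hXd : HasDerivAt (fun s => u (Ψ (r.1, s, r.2.2)))
        (pdy (fun x => u (Ψ x)) r) r.2.1 := hasDerivAt_pdy (hub r hr)
    have h1 : HasDerivAt (fun s => r.1 + ε * m (u (Ψ (r.1, s, r.2.2))))
        (0 + ε * (deriv m (u (Ψ r)) * pdy (fun x => u (Ψ x)) r)) r.2.1 :=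
      (hasDerivAt_const _ _).add
        (HasDerivAt.const_mul ε (((hm1 (u (Ψ r))).hasDerivAt).comp r.2.1 hXd))
    have h2 : HasDerivAt (fun s => s + ε * P (u (Ψ (r.1, s, r.2.2))))
        (1 + ε * (deriv P (u (Ψ r)) * pdy (fun x => u (Ψ x)) r)) r.2.1 :=
      (hasDerivAt_id r.2.1).add
        (HasDerivAt.const_mul ε (((hP1 (u (Ψ r))).hasDerivAt).comp r.2.1 hXd))
    have h3 : HasDerivAt (fun _ : ℝ => r.2.2) 0 r.2.1 := hasDerivAt_const _ _
    have hγ : HasDerivAt (fun s => Ψ (r.1, s, r.2.2))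
        ((0 + ε * (deriv m (u (Ψ r)) * pdy (fun x => u (Ψ x)) r)),
          (1 + ε * (deriv P (u (Ψ r)) * pdy (fun x => u (Ψ x)) r)), (0:ℝ)) r.2.1 := by
      refine (h1.prodMk (h2.prodMk h3)).congr_of_eventuallyEq ?_
      filter_upwards [hnbY r hr] with s hs
      exact hstruct _ hs
    have hbig := hasDerivAt_comp_curve hγ hw
    have hres : pdy (fun x => w (Ψ x)) r = _ := hbig.deriv
    rw [hres]
    simp only [Prod.mk.eta]
    ring
  -- t-direction
  have transT : ∀ r ∈ Ωb, ∀ w : ℝ × ℝ × ℝ → ℝ, DifferentiableAt ℝ w (Ψ r) →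
      pdt (fun x => w (Ψ x)) r =
        (ε * (deriv m (u (Ψ r)) * pdt (fun x => u (Ψ x)) r)) * pdx w (Ψ r)
          + (ε * (deriv P (u (Ψ r)) * pdt (fun x => u (Ψ x)) r)) * pdy w (Ψ r)
          + pdt w (Ψ r) := by
    intro r hr w hw
    have hXd : HasDerivAt (fun s => u (Ψ (r.1, r.2.1, s)))
        (pdt (fun x => u (Ψ x)) r) r.2.2 := hasDerivAt_pdt (hub r hr)
    have h1 : HasDerivAt (fun s => r.1 + ε * m (u (Ψ (r.1, r.2.1, s))))
        (0 + ε * (deriv m (u (Ψ r)) * pdt (fun x => u (Ψ x)) r)) r.2.2 :=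
      (hasDerivAt_const _ _).add
        (HasDerivAt.const_mul ε (((hm1 (u (Ψ r))).hasDerivAt).comp r.2.2 hXd))
    have h2 : HasDerivAt (fun s => r.2.1 + ε * P (u (Ψ (r.1, r.2.1, s))))
        (0 + ε * (deriv P (u (Ψ r)) * pdt (fun x => u (Ψ x)) r)) r.2.2 :=
      (hasDerivAt_const _ _).add
        (HasDerivAt.const_mul ε (((hP1 (u (Ψ r))).hasDerivAt).comp r.2.2 hXd))
    have h3 : HasDerivAt (fun s : ℝ => s) 1 r.2.2 := hasDerivAt_id _
    have hγ : HasDerivAt (fun s => Ψ (r.1, r.2.1, s))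
        ((0 + ε * (deriv m (u (Ψ r)) * pdt (fun x => u (Ψ x)) r)),
          (0 + ε * (deriv P (u (Ψ r)) * pdt (fun x => u (Ψ x)) r)), (1:ℝ)) r.2.2 := by
      refine (h1.prodMk (h2.prodMk h3)).congr_of_eventuallyEq ?_
      filter_upwards [hnbT r hr] with s hs
      exact hstruct _ hs
    have hbig := hasDerivAt_comp_curve hγ hw
    have hres : pdt (fun x => w (Ψ x)) r = _ := hbig.deriv
    rw [hres]
    simp only [Prod.mk.eta]
    ring
  -- first derivatives of ubar = u ∘ Ψ
  have hpdxub : ∀ r ∈ Ωb, pdx (fun x => u (Ψ x)) r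
      = pdx u (Ψ r) / (1 - ε * (deriv m (u (Ψ r)) * pdx u (Ψ r) + deriv P (u (Ψ r)) * pdy u (Ψ r))) := by
    intro r hr
    have h := transX r hr u (hudiff _ (hmem r hr))
    rw [eq_div_iff (hD _ (hmem r hr))]
    linear_combination h
  have hpdyub : ∀ r ∈ Ωb, pdy (fun x => u (Ψ x)) r
      = pdy u (Ψ r) / (1 - ε * (deriv m (u (Ψ r)) * pdx u (Ψ r) + deriv P (u (Ψ r)) * pdy u (Ψ r))) := by
    intro r hr
    have h := transY r hr u (hudiff _ (hmem r hr))
    rw [eq_div_iff (hD _ (hmem r hr))]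
    linear_combination h
  have hpdtub : ∀ r ∈ Ωb, pdt (fun x => u (Ψ x)) r
      = pdt u (Ψ r) / (1 - ε * (deriv m (u (Ψ r)) * pdx u (Ψ r) + deriv P (u (Ψ r)) * pdy u (Ψ r))) := by
    intro r hr
    have h := transT r hr u (hudiff _ (hmem r hr))
    rw [eq_div_iff (hD _ (hmem r hr))]
    linear_combination h
  -- representations of Fb, Gb, Hb on Ωb
  have hFbeq : ∀ r ∈ Ωb, Fb r =
      ((1 - ε * deriv m (u (Ψ r)) * pdx u (Ψ r)) * F (Ψ r)
          - ε * deriv m (u (Ψ r)) * (pdy u (Ψ r) * G (Ψ r) - (pdt u (Ψ r)) ^ 2))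
        / (1 - ε * (deriv m (u (Ψ r)) * pdx u (Ψ r) + deriv P (u (Ψ r)) * pdy u (Ψ r))) := by
    intro r hr
    rw [← himage] at hr
    obtain ⟨s, hs, rfl⟩ := hr
    rw [hleft s hs]
    exact hFb s hs
  have hGbeq : ∀ r ∈ Ωb, Gb r =
      ((1 - ε * deriv P (u (Ψ r)) * pdy u (Ψ r)) * G (Ψ r)
          - ε * deriv P (u (Ψ r)) * (pdx u (Ψ r) * F (Ψ r) - (pdt u (Ψ r)) ^ 2))
        / (1 - ε * (deriv m (u (Ψ r)) * pdx u (Ψ r) + deriv P (u (Ψ r)) * pdy u (Ψ r))) := by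
    intro r hr
    rw [← himage] at hr
    obtain ⟨s, hs, rfl⟩ := hr
    rw [hleft s hs]
    exact hGb s hs
  have hHbeq : ∀ r ∈ Ωb, Hb r =
      H (Ψ r) / (1 - ε * (deriv m (u (Ψ r)) * pdx u (Ψ r) + deriv P (u (Ψ r)) * pdy u (Ψ r))) := by
    intro r hr
    rw [← himage] at hr
    obtain ⟨s, hs, rfl⟩ := hr
    rw [hleft s hs]
    exact hHb s hs
  -- main computation
  intro qb hqb
  have hq : Ψ qb ∈ Ω := hmem qb hqb
  have hu_q := hudiff _ hq
  have hux_q := hpdxu _ hq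
  have huy_q := hpdyu _ hq
  have hut_q := hpdtu _ hq
  have hFq_q := hFdiff _ hq
  have hGq_q := hGdiff _ hq
  have hA_d : DifferentiableAt ℝ (fun z => deriv m (u z)) (Ψ qb) :=
    (hmd1 (u (Ψ qb))).comp (Ψ qb) hu_q
  have hB_d : DifferentiableAt ℝ (fun z => deriv P (u z)) (Ψ qb) :=
    (hPd1 (u (Ψ qb))).comp (Ψ qb) hu_q
  -- line derivatives at Ψ qb, x-direction
  have hu_x := hasDerivAt_pdx hu_q
  have hux_x := hasDerivAt_pdx hux_q
  have huy_x := hasDerivAt_pdx huy_q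
  have hut_x := hasDerivAt_pdx hut_q
  have hFq_x := hasDerivAt_pdx hFq_q
  have hGq_x := hasDerivAt_pdx hGq_q
  have hA_x : HasDerivAt (fun s => deriv m (u (s, (Ψ qb).2.1, (Ψ qb).2.2)))
      (deriv (deriv m) (u (Ψ qb)) * pdx u (Ψ qb)) (Ψ qb).1 :=
    ((hmd1 (u (Ψ qb))).hasDerivAt).comp (h₂ := deriv m) (Ψ qb).1 hu_x
  have hB_x : HasDerivAt (fun s => deriv P (u (s, (Ψ qb).2.1, (Ψ qb).2.2)))
      (deriv (deriv P) (u (Ψ qb)) * pdx u (Ψ qb)) (Ψ qb).1 :=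
    ((hPd1 (u (Ψ qb))).hasDerivAt).comp (h₂ := deriv P) (Ψ qb).1 hu_x
  -- y-direction
  have hu_y := hasDerivAt_pdy hu_q
  have hux_y := hasDerivAt_pdy hux_q
  have huy_y := hasDerivAt_pdy huy_q
  have hut_y := hasDerivAt_pdy hut_q
  have hFq_y := hasDerivAt_pdy hFq_q
  have hGq_y := hasDerivAt_pdy hGq_q
  have hA_y : HasDerivAt (fun s => deriv m (u ((Ψ qb).1, s, (Ψ qb).2.2)))
      (deriv (deriv m) (u (Ψ qb)) * pdy u (Ψ qb)) (Ψ qb).2.1 :=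
    ((hmd1 (u (Ψ qb))).hasDerivAt).comp (h₂ := deriv m) (Ψ qb).2.1 hu_y
  have hB_y : HasDerivAt (fun s => deriv P (u ((Ψ qb).1, s, (Ψ qb).2.2)))
      (deriv (deriv P) (u (Ψ qb)) * pdy u (Ψ qb)) (Ψ qb).2.1 :=
    ((hPd1 (u (Ψ qb))).hasDerivAt).comp (h₂ := deriv P) (Ψ qb).2.1 hu_y
  -- t-direction
  have hu_t := hasDerivAt_pdt hu_q
  have hux_t := hasDerivAt_pdt hux_q
  have huy_t := hasDerivAt_pdt huy_q
  have hut_t := hasDerivAt_pdt hut_q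
  have hA_t : HasDerivAt (fun s => deriv m (u ((Ψ qb).1, (Ψ qb).2.1, s)))
      (deriv (deriv m) (u (Ψ qb)) * pdt u (Ψ qb)) (Ψ qb).2.2 :=
    ((hmd1 (u (Ψ qb))).hasDerivAt).comp (h₂ := deriv m) (Ψ qb).2.2 hu_t
  have hB_t : HasDerivAt (fun s => deriv P (u ((Ψ qb).1, (Ψ qb).2.1, s)))
      (deriv (deriv P) (u (Ψ qb)) * pdt u (Ψ qb)) (Ψ qb).2.2 :=
    ((hPd1 (u (Ψ qb))).hasDerivAt).comp (h₂ := deriv P) (Ψ qb).2.2 hu_t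
  have hDend : DifferentiableAt ℝ
      (fun z => 1 - ε * (deriv m (u z) * pdx u z + deriv P (u z) * pdy u z)) (Ψ qb) :=
    (differentiableAt_const (1:ℝ)).sub
      (((hA_d.mul hux_q).add (hB_d.mul huy_q)).const_mul ε)
  have hDen_x := (hasDerivAt_const (Ψ qb).1 (1:ℝ)).sub
    (HasDerivAt.const_mul ε ((hA_x.mul hux_x).add (hB_x.mul huy_x)))
  have hDen_y := (hasDerivAt_const (Ψ qb).2.1 (1:ℝ)).sub
    (HasDerivAt.const_mul ε ((hA_y.mul hux_y).add (hB_y.mul huy_y)))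
  have hDen_t := (hasDerivAt_const (Ψ qb).2.2 (1:ℝ)).sub
    (HasDerivAt.const_mul ε ((hA_t.mul hux_t).add (hB_t.mul huy_t)))
  -- 3D differentiability of the composite flux/source expressions at Ψ qb
  have hK_d : DifferentiableAt ℝ (fun z => pdt u z / (1 - ε * (deriv m (u z) * pdx u z + deriv P (u z) * pdy u z))) (Ψ qb) :=
    diffAt_div3 hut_q hDend (hD _ hq)
  have hEF_d : DifferentiableAt ℝ (fun z => ((1 - ε * deriv m (u z) * pdx u z) * F z - ε * deriv m (u z) * (pdy u z * G z - pdt u z ^ 2)) / (1 - ε * (deriv m (u z) * pdx u z + deriv P (u z) * pdy u z))) (Ψ qb) :=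
    ((((differentiableAt_const (1:ℝ)).sub ((hA_d.const_mul ε).mul hux_q)).mul hFq_q).sub
      ((hA_d.const_mul ε).mul ((huy_q.mul hGq_q).sub (hut_q.pow 2)))) |> (fun hnum => diffAt_div3 hnum hDend (hD _ hq))
  have hEG_d : DifferentiableAt ℝ (fun z => ((1 - ε * deriv P (u z) * pdy u z) * G z - ε * deriv P (u z) * (pdx u z * F z - pdt u z ^ 2)) / (1 - ε * (deriv m (u z) * pdx u z + deriv P (u z) * pdy u z))) (Ψ qb) :=
    ((((differentiableAt_const (1:ℝ)).sub ((hB_d.const_mul ε).mul huy_q)).mul hGq_q).sub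
      ((hB_d.const_mul ε).mul ((hux_q.mul hFq_q).sub (hut_q.pow 2)))) |> (fun hnum => diffAt_div3 hnum hDend (hD _ hq))
  -- derivatives of K along the three directions
  have hKx := hut_x.div hDen_x (by exact hD _ hq)
  have hKy := hut_y.div hDen_y (by exact hD _ hq)
  have hKt := hut_t.div hDen_t (by exact hD _ hq)
  have eKx : pdx (fun z => pdt u z / (1 - ε * (deriv m (u z) * pdx u z + deriv P (u z) * pdy u z))) (Ψ qb) = _ := hKx.deriv
  have eKy : pdy (fun z => pdt u z / (1 - ε * (deriv m (u z) * pdx u z + deriv P (u z) * pdy u z))) (Ψ qb) = _ := hKy.deriv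
  have eKt : pdt (fun z => pdt u z / (1 - ε * (deriv m (u z) * pdx u z + deriv P (u z) * pdy u z))) (Ψ qb) = _ := hKt.deriv
  -- derivatives of E_F along x and y
  have hEFx := ((((hasDerivAt_const (Ψ qb).1 (1:ℝ)).sub
      ((HasDerivAt.const_mul ε hA_x).mul hux_x)).mul hFq_x).sub
      ((HasDerivAt.const_mul ε hA_x).mul ((huy_x.mul hGq_x).sub (hut_x.pow 2)))).div hDen_x (by exact hD _ hq)
  have hEFy := ((((hasDerivAt_const (Ψ qb).2.1 (1:ℝ)).sub
      ((HasDerivAt.const_mul ε hA_y).mul hux_y)).mul hFq_y).sub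
      ((HasDerivAt.const_mul ε hA_y).mul ((huy_y.mul hGq_y).sub (hut_y.pow 2)))).div hDen_y (by exact hD _ hq)
  have eEFx : pdx (fun z => ((1 - ε * deriv m (u z) * pdx u z) * F z - ε * deriv m (u z) * (pdy u z * G z - pdt u z ^ 2)) / (1 - ε * (deriv m (u z) * pdx u z + deriv P (u z) * pdy u z))) (Ψ qb) = _ := hEFx.deriv
  have eEFy : pdy (fun z => ((1 - ε * deriv m (u z) * pdx u z) * F z - ε * deriv m (u z) * (pdy u z * G z - pdt u z ^ 2)) / (1 - ε * (deriv m (u z) * pdx u z + deriv P (u z) * pdy u z))) (Ψ qb) = _ := hEFy.deriv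
  -- derivatives of E_G along x and y
  have hEGx := ((((hasDerivAt_const (Ψ qb).1 (1:ℝ)).sub
      ((HasDerivAt.const_mul ε hB_x).mul huy_x)).mul hGq_x).sub
      ((HasDerivAt.const_mul ε hB_x).mul ((hux_x.mul hFq_x).sub (hut_x.pow 2)))).div hDen_x (by exact hD _ hq)
  have hEGy := ((((hasDerivAt_const (Ψ qb).2.1 (1:ℝ)).sub
      ((HasDerivAt.const_mul ε hB_y).mul huy_y)).mul hGq_y).sub
      ((HasDerivAt.const_mul ε hB_y).mul ((hux_y.mul hFq_y).sub (hut_y.pow 2)))).div hDen_y (by exact hD _ hq)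
  have eEGx : pdx (fun z => ((1 - ε * deriv P (u z) * pdy u z) * G z - ε * deriv P (u z) * (pdx u z * F z - pdt u z ^ 2)) / (1 - ε * (deriv m (u z) * pdx u z + deriv P (u z) * pdy u z))) (Ψ qb) = _ := hEGx.deriv
  have eEGy : pdy (fun z => ((1 - ε * deriv P (u z) * pdy u z) * G z - ε * deriv P (u z) * (pdx u z * F z - pdt u z ^ 2)) / (1 - ε * (deriv m (u z) * pdx u z + deriv P (u z) * pdy u z))) (Ψ qb) = _ := hEGy.deriv
  -- rewrite the left-hand side
  have hL1 : pdt (pdt (fun r => u (Ψ r))) qb = pdt (fun x => pdt u (Ψ x) / (1 - ε * (deriv m (u (Ψ x)) * pdx u (Ψ x) + deriv P (u (Ψ x)) * pdy u (Ψ x)))) qb := by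
    apply pdt_congr
    filter_upwards [hΩb.mem_nhds hqb] with r hr
    exact hpdtub r hr
  have hL2 := transT qb hqb (fun z => pdt u z / (1 - ε * (deriv m (u z) * pdx u z + deriv P (u z) * pdy u z))) hK_d
  -- rewrite the right-hand side
  have hR1 : pdx Fb qb = pdx (fun x => ((1 - ε * deriv m (u (Ψ x)) * pdx u (Ψ x)) * F (Ψ x) - ε * deriv m (u (Ψ x)) * (pdy u (Ψ x) * G (Ψ x) - pdt u (Ψ x) ^ 2)) / (1 - ε * (deriv m (u (Ψ x)) * pdx u (Ψ x) + deriv P (u (Ψ x)) * pdy u (Ψ x)))) qb := by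
    apply pdx_congr
    filter_upwards [hΩb.mem_nhds hqb] with r hr
    exact hFbeq r hr
  have hR2 := transX qb hqb (fun z => ((1 - ε * deriv m (u z) * pdx u z) * F z - ε * deriv m (u z) * (pdy u z * G z - pdt u z ^ 2)) / (1 - ε * (deriv m (u z) * pdx u z + deriv P (u z) * pdy u z))) hEF_d
  have hR3 : pdy Gb qb = pdy (fun x => ((1 - ε * deriv P (u (Ψ x)) * pdy u (Ψ x)) * G (Ψ x) - ε * deriv P (u (Ψ x)) * (pdx u (Ψ x) * F (Ψ x) - pdt u (Ψ x) ^ 2)) / (1 - ε * (deriv m (u (Ψ x)) * pdx u (Ψ x) + deriv P (u (Ψ x)) * pdy u (Ψ x)))) qb := by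
    apply pdy_congr
    filter_upwards [hΩb.mem_nhds hqb] with r hr
    exact hGbeq r hr
  have hR4 := transY qb hqb (fun z => ((1 - ε * deriv P (u z) * pdy u z) * G z - ε * deriv P (u z) * (pdx u z * F z - pdt u z ^ 2)) / (1 - ε * (deriv m (u z) * pdx u z + deriv P (u z) * pdy u z))) hEG_d
  rw [hL1, hL2, hpdtub qb hqb, hR1, hR2, hpdxub qb hqb, hR3, hR4, hpdyub qb hqb,
    hHbeq qb hqb, eKx, eKy, eKt, eEFx, eEFy, eEGx, eEGy,
    ← hmix_xt _ hq, ← hmix_yt _ hq, hmix_xy _ hq, hwave _ hq]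
  have hD0 : (1 - ε * (deriv m (u (Ψ qb)) * pdx u (Ψ qb) + deriv P (u (Ψ qb)) * pdy u (Ψ qb))) ≠ 0 := hD _ hq
  simp only [Pi.sub_apply, Pi.add_apply, Pi.mul_apply, Pi.pow_apply, Prod.mk.eta] at *
  field_simp [hD0]
  ring
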